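/- Let t : Fin n → A × B model a bag relation that does not satisfy the FD X→Y, and let K be the number of distinct X-values of t. Then 1 − E_σ[pdep(t_σ)] ≠ 0, n > K, 1 − pdepY > 0, and (pdep(t) − E_σ[pdep(t_σ)])/(1 − E_σ[pdep(t_σ)]) = 1 − ((1 − pdep(t))/(1 − pdepY)) · ((n−1)/(n−K)), where E_σ[pdep(t_σ)] denotes the average of pdep(t_σ) over all n! permutations σ of Fin n. (Equivalent closed form of the measure μ.) -/

import Mathlib

/-!
For `i ≠ j`, the pair `(σ i, σ j)` is uniformly distributed over the ordered pairs of distinct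
indices as `σ` ranges over all permutations, so in `t_σ` two distinct tuples agree on `Y` with
probability `q = (n · pdepY − 1)/(n − 1)`. Writing `pdep u = Σ_a N_a(u)/(n · c₁(a))`, where
`N_a(u)` counts the ordered pairs of tuples with X-value `a` that agree on `Y`, the average of
`N_a(t_σ)` is `c₁(a) (1 + (c₁(a) − 1) q)`. Hence `E_σ[pdep(t_σ)] = (K + (n − K) q)/n`, that is
`1 − E_σ[pdep(t_σ)] = (n − K)(1 − pdepY)/(n − 1)`, and the closed form is algebra from there.
A violation of the FD gives two tuples with equal `X` and different `Y`, whence `K < n` and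
`pdepY < 1`.
-/

namespace AFD

open Finset

variable {A B : Type*}

/-- Number of indices with X-value `a`. -/
def c1 {n : ℕ} [DecidableEq A] (t : Fin n → A × B) (a : A) : ℕ :=
  (Finset.univ.filter fun i => (t i).1 = a).card

/-- Number of indices with Y-value `b`. -/
def c2 {n : ℕ} [DecidableEq B] (t : Fin n → A × B) (b : B) : ℕ :=
  (Finset.univ.filter fun i => (t i).2 = b).card

/-- Number of indices with tuple value `(a, b)`. -/
def cnt {n : ℕ} [DecidableEq A] [DecidableEq B] (t : Fin n → A × B) (a : A) (b : B) : ℕ :=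
  (Finset.univ.filter fun i => t i = (a, b)).card

/-- Marginal probability of X-value `a`. -/
noncomputable def p1 {n : ℕ} [DecidableEq A] (t : Fin n → A × B) (a : A) : ℝ :=
  (c1 t a : ℝ) / n

/-- Marginal probability of Y-value `b`. -/
noncomputable def p2 {n : ℕ} [DecidableEq B] (t : Fin n → A × B) (b : B) : ℝ :=
  (c2 t b : ℝ) / n

/-- Joint probability of `(a, b)`. -/
noncomputable def pJ {n : ℕ} [DecidableEq A] [DecidableEq B] (t : Fin n → A × B)
    (a : A) (b : B) : ℝ :=
  (cnt t a b : ℝ) / n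

/-- Conditional probability of Y-value `b` given X-value `a` (with the `0/0 = 0` convention,
which is automatic for real division in Lean). -/
noncomputable def pC {n : ℕ} [DecidableEq A] [DecidableEq B] (t : Fin n → A × B)
    (a : A) (b : B) : ℝ :=
  pJ t a b / p1 t a

/-- The set of distinct X-values. -/
def domX {n : ℕ} [DecidableEq A] (t : Fin n → A × B) : Finset A :=
  Finset.univ.image fun i => (t i).1

/-- The set of distinct Y-values. -/
def domY {n : ℕ} [DecidableEq B] (t : Fin n → A × B) : Finset B :=
  Finset.univ.image fun i => (t i).2

/-- The set of distinct tuples. -/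
def domXY {n : ℕ} [DecidableEq A] [DecidableEq B] (t : Fin n → A × B) : Finset (A × B) :=
  Finset.univ.image t

/-- The probabilistic dependency `pdep(X → Y)`. -/
noncomputable def pdep {n : ℕ} [DecidableEq A] [DecidableEq B] (t : Fin n → A × B) : ℝ :=
  ∑ a ∈ domX t, p1 t a * ∑ b ∈ domY t, (pC t a b) ^ 2

/-- The probabilistic self-dependency `pdep(Y)`. -/
noncomputable def pdepY {n : ℕ} [DecidableEq B] (t : Fin n → A × B) : ℝ :=
  ∑ b ∈ domY t, (p2 t b) ^ 2

/-- The (X;Y)-permutation of `t` induced by the permutation `σ`. -/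
def permRel {n : ℕ} (t : Fin n → A × B) (σ : Equiv.Perm (Fin n)) : Fin n → A × B :=
  fun i => ((t i).1, (t (σ i)).2)

/-- `t` satisfies the functional dependency X → Y. -/
def satFD {n : ℕ} (t : Fin n → A × B) : Prop :=
  ∀ i j, (t i).1 = (t j).1 → (t i).2 = (t j).2

theorem _root_.Equiv.Perm.exists_apply_eq_and_apply_eq {α : Type*} [DecidableEq α] {i j k l : α}
    (hij : i ≠ j) (hkl : k ≠ l) : ∃ τ : Equiv.Perm α, τ i = k ∧ τ j = l := by
  refine ⟨Equiv.swap (Equiv.swap i k j) l * Equiv.swap i k, ?_, by simp⟩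
  have : Equiv.swap i k j ≠ k := by
    rw [Ne, Equiv.swap_apply_eq_iff, Equiv.swap_apply_right]; exact hij.symm
  simp [Equiv.swap_apply_of_ne_of_ne this.symm hkl]

theorem _root_.Equiv.Perm.sum_apply_apply_eq_of_ne {α M : Type*} [Fintype α] [DecidableEq α]
    [AddCommMonoid M] (f : α → α → M) {i j k l : α} (hij : i ≠ j) (hkl : k ≠ l) :
    ∑ σ : Equiv.Perm α, f (σ i) (σ j) = ∑ σ : Equiv.Perm α, f (σ k) (σ l) := by
  obtain ⟨τ, hτi, hτj⟩ := Equiv.Perm.exists_apply_eq_and_apply_eq hij hkl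
  rw [← Equiv.sum_comp (Equiv.mulRight τ)]
  simp [hτi, hτj]

theorem _root_.Equiv.Perm.card_offDiag_smul_sum_apply_apply {α M : Type*} [Fintype α]
    [DecidableEq α] [AddCommMonoid M] (f : α → α → M) {i j : α} (hij : i ≠ j) :
    #(univ : Finset α).offDiag • ∑ σ : Equiv.Perm α, f (σ i) (σ j) =
      (Fintype.card α).factorial • ∑ p ∈ (univ : Finset α).offDiag, f p.1 p.2 := by
  calc #(univ : Finset α).offDiag • ∑ σ : Equiv.Perm α, f (σ i) (σ j)
      = ∑ p ∈ (univ : Finset α).offDiag, ∑ σ : Equiv.Perm α, f (σ p.1) (σ p.2) := by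
        rw [← sum_const]
        exact sum_congr rfl fun p hp =>
          Equiv.Perm.sum_apply_apply_eq_of_ne f hij (mem_offDiag.1 hp).2.2
    _ = ∑ σ : Equiv.Perm α, ∑ p ∈ (univ : Finset α).offDiag, f p.1 p.2 := by
        rw [sum_comm]
        exact sum_congr rfl fun σ _ =>
          sum_equiv (σ.prodCongr σ) (by simp [σ.injective.ne_iff]) (by simp)
    _ = _ := by simp [Fintype.card_perm]

theorem _root_.Finset.sum_card_fiber_sq {ι β : Type*} [DecidableEq β] (s : Finset ι)
    (g : ι → β) {T : Finset β} (hT : ∀ i ∈ s, g i ∈ T) :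
    ∑ b ∈ T, #{i ∈ s | g i = b} ^ 2 = #{p ∈ s ×ˢ s | g p.1 = g p.2} := by
  rw [card_eq_sum_card_fiberwise (f := fun p => g p.1) (t := T)
    fun p hp => hT _ (mem_product.1 (mem_filter.1 hp).1).1]
  refine sum_congr rfl fun b _ => ?_
  rw [sq, ← card_product, filter_filter]
  congr 1
  ext p
  simp only [mem_filter, mem_product]
  grind

variable {n : ℕ} (t : Fin n → A × B)

section SameY

variable [DecidableEq B]

theorem sq_mul_pdepY :
    (n : ℝ) ^ 2 * pdepY t = #{p ∈ univ ×ˢ univ | (t p.1).2 = (t p.2).2} := by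
  rw [← Finset.sum_card_fiber_sq univ (fun i => (t i).2)
    fun i _ => mem_image_of_mem (fun i => (t i).2) (mem_univ i)]
  rcases eq_or_ne (n : ℝ) 0 with hn | hn
  · obtain rfl : n = 0 := by exact_mod_cast hn
    simp [pdepY, domY]
  · simp only [pdepY, p2, mul_sum, div_pow]
    push_cast
    refine sum_congr rfl fun b _ => ?_
    field_simp
    rfl

theorem pdepY_lt_one {i j : Fin n} (hij : (t i).2 ≠ (t j).2) : pdepY t < 1 := by
  have hn : (0 : ℝ) < n ^ 2 := by
    have : 0 < n := i.pos
    positivity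
  have hlt : #{p ∈ univ ×ˢ univ | (t p.1).2 = (t p.2).2} < n ^ 2 := by
    calc #{p ∈ univ ×ˢ univ | (t p.1).2 = (t p.2).2}
        < #(univ ×ˢ univ : Finset (Fin n × Fin n)) :=
          card_lt_card (filter_ssubset.2 ⟨(i, j), by simp, hij⟩)
      _ = n ^ 2 := by simp [sq]
  rw [← mul_lt_mul_iff_right₀ hn, mul_one, sq_mul_pdepY]
  exact_mod_cast hlt

theorem card_filter_offDiag_add :
    #{p ∈ univ.offDiag | (t p.1).2 = (t p.2).2} + n =
      #{p ∈ univ ×ˢ univ | (t p.1).2 = (t p.2).2} := by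
  rw [← diag_union_offDiag, filter_union, card_union_of_disjoint
    (disjoint_filter_filter (disjoint_diag_offDiag _)),
    filter_true_of_mem (s := univ.diag) (by simp +contextual), diag_card, card_fin, add_comm]

noncomputable def sameYProb : ℝ :=
  #{p ∈ (univ : Finset (Fin n)).offDiag | (t p.1).2 = (t p.2).2} / (n * (n - 1))

theorem sameYProb_eq (hn : 1 < n) : sameYProb t = (n * pdepY t - 1) / (n - 1) := by
  have h := card_filter_offDiag_add t
  have hn' : (1 : ℝ) < n := by exact_mod_cast hn
  rw [sameYProb, eq_div_iff (by linarith), div_mul_eq_mul_div, div_eq_iff (by positivity)]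
  have := sq_mul_pdepY t
  rw [← h] at this
  push_cast at this
  linear_combination (1 - (n : ℝ)) * this

theorem sum_perm_sameY (i j : Fin n) :
    ∑ σ : Equiv.Perm (Fin n), (if (t (σ i)).2 = (t (σ j)).2 then 1 else 0 : ℝ) =
      n.factorial * if i = j then 1 else sameYProb t := by
  by_cases hij : i = j
  · simp [hij, Fintype.card_perm]
  have h := Equiv.Perm.card_offDiag_smul_sum_apply_apply
    (fun k l => if (t k).2 = (t l).2 then (1 : ℝ) else 0) hij
  have hn : (1 : ℝ) < n := by
    exact_mod_cast (Fintype.card_fin n ▸ Fintype.one_lt_card_iff.2 ⟨i, j, hij⟩)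
  simp only [nsmul_eq_mul, offDiag_card, card_univ, Fintype.card_fin, ← natCast_card_filter] at h
  rw [if_neg hij, sameYProb, ← natCast_card_filter, mul_div_assoc', eq_div_iff (by positivity)]
  rw [Nat.cast_sub (Nat.le_mul_self n)] at h
  push_cast at h
  linear_combination h

theorem sum_perm_card_sameY (s : Finset (Fin n)) :
    ∑ σ : Equiv.Perm (Fin n), (#{p ∈ s ×ˢ s | (t (σ p.1)).2 = (t (σ p.2)).2} : ℝ) =
      n.factorial * (#s + #s * (#s - 1) * sameYProb t) := by
  simp only [natCast_card_filter]
  rw [sum_comm, ← diag_union_offDiag, sum_union (disjoint_diag_offDiag s)]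
  simp only [sum_perm_sameY, ← mul_sum]
  rw [sum_ite_of_true fun p hp => (mem_diag.1 hp).2,
    sum_ite_of_false fun p hp => (mem_offDiag.1 hp).2.2]
  simp [Nat.cast_sub (Nat.le_mul_self _)]
  ring

end SameY

section DomX

variable [DecidableEq A]

def fiberX (a : A) : Finset (Fin n) := {i | (t i).1 = a}

theorem sum_c1 : ∑ a ∈ domX t, c1 t a = n := by
  simpa [domX, c1] using (card_eq_sum_card_image (fun i => (t i).1) univ).symm

theorem c1_pos {a : A} (ha : a ∈ domX t) : 0 < c1 t a := by
  obtain ⟨i, -, rfl⟩ := mem_image.1 ha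
  exact card_pos.2 ⟨i, by simp⟩

theorem card_domX_lt {i j : Fin n} (hij : i ≠ j) (hx : (t i).1 = (t j).1) : #(domX t) < n := by
  refine (card_image_le.trans_eq (card_fin n)).lt_of_ne fun h => hij ?_
  exact card_image_iff.1 (h.trans (card_fin n).symm) (mem_coe.2 (mem_univ i))
    (mem_coe.2 (mem_univ j)) hx

end DomX

variable [DecidableEq A] [DecidableEq B]

theorem sum_sq_cnt (a : A) :
    ∑ b ∈ domY t, cnt t a b ^ 2 = #{p ∈ fiberX t a ×ˢ fiberX t a | (t p.1).2 = (t p.2).2} := by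
  rw [← Finset.sum_card_fiber_sq (fiberX t a) (fun i => (t i).2)
    fun i _ => mem_image_of_mem (fun i => (t i).2) (mem_univ i)]
  refine sum_congr rfl fun b _ => ?_
  rw [cnt, fiberX, filter_filter]
  simp only [Prod.ext_iff]

theorem pdep_eq_sum_card :
    pdep t = ∑ a ∈ domX t,
      (#{p ∈ fiberX t a ×ˢ fiberX t a | (t p.1).2 = (t p.2).2} : ℝ) / (n * c1 t a) := by
  refine sum_congr rfl fun a ha => ?_
  have hc : (c1 t a : ℝ) ≠ 0 := by exact_mod_cast (c1_pos t ha).ne'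
  rw [← sum_sq_cnt, Nat.cast_sum]
  simp only [p1, pC, pJ]
  rcases eq_or_ne (n : ℝ) 0 with hn | hn
  · simp [hn]
  · rw [sum_div, mul_sum]
    refine sum_congr rfl fun b _ => ?_
    field_simp
    push_cast
    ring

theorem sum_perm_pdep :
    ∑ σ : Equiv.Perm (Fin n), pdep (permRel t σ) =
      n.factorial / n * (#(domX t) + (n - #(domX t)) * sameYProb t) := by
  have h σ : pdep (permRel t σ) = ∑ a ∈ domX t,
      (#{p ∈ fiberX t a ×ˢ fiberX t a | (t (σ p.1)).2 = (t (σ p.2)).2} : ℝ) / (n * c1 t a) :=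
    pdep_eq_sum_card (permRel t σ)
  simp only [h]
  rw [sum_comm]
  simp only [← sum_div, sum_perm_card_sameY]
  have hterm : ∀ a ∈ domX t, (n.factorial * (#(fiberX t a) + #(fiberX t a) *
      (#(fiberX t a) - 1) * sameYProb t) / (n * c1 t a) : ℝ) =
        n.factorial / n * (1 + (c1 t a - 1) * sameYProb t) := fun a ha => by
    have hc : (c1 t a : ℝ) ≠ 0 := by exact_mod_cast (c1_pos t ha).ne'
    rw [show #(fiberX t a) = c1 t a from rfl]
    field_simp
  rw [sum_congr rfl hterm, ← mul_sum, sum_add_distrib, ← sum_mul, sum_sub_distrib]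
  simp [← Nat.cast_sum, sum_c1]

theorem one_sub_avg_pdep_permRel (hn : 1 < n) :
    1 - (∑ σ : Equiv.Perm (Fin n), pdep (permRel t σ)) / n.factorial =
      (n - #(domX t)) * (1 - pdepY t) / (n - 1) := by
  have hn' : (1 : ℝ) < n := by exact_mod_cast hn
  have hn1 : (n : ℝ) - 1 ≠ 0 := by linarith
  have hf : (n.factorial : ℝ) ≠ 0 := by positivity
  rw [sum_perm_pdep, sameYProb_eq t hn]
  field_simp
  ring

/-- Equivalent closed form of the measure μ for relations violating the FD X→Y. -/
theorem mu_closed_form {A B : Type*} [DecidableEq A] [DecidableEq B]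
    {n : ℕ} (t : Fin n → A × B) (h : ¬ satFD t) :
    1 - (∑ σ : Equiv.Perm (Fin n), pdep (permRel t σ)) / (n.factorial : ℝ) ≠ 0 ∧
    (domX t).card < n ∧
    0 < 1 - pdepY t ∧
    (pdep t - (∑ σ : Equiv.Perm (Fin n), pdep (permRel t σ)) / (n.factorial : ℝ)) /
        (1 - (∑ σ : Equiv.Perm (Fin n), pdep (permRel t σ)) / (n.factorial : ℝ)) =
      1 - (1 - pdep t) / (1 - pdepY t) *
        (((n : ℝ) - 1) / ((n : ℝ) - ((domX t).card : ℝ))) := by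
  obtain ⟨i, j, hx, hy⟩ : ∃ i j, (t i).1 = (t j).1 ∧ (t i).2 ≠ (t j).2 := by
    simpa [satFD] using h
  have hij : i ≠ j := by rintro rfl; exact hy rfl
  have hn : 1 < n := Fintype.card_fin n ▸ Fintype.one_lt_card_iff.2 ⟨i, j, hij⟩
  have hK := card_domX_lt t hij hx
  have hY : 0 < 1 - pdepY t := sub_pos.2 (pdepY_lt_one t hy)
  have hE := one_sub_avg_pdep_permRel t hn
  set E := (∑ σ : Equiv.Perm (Fin n), pdep (permRel t σ)) / (n.factorial : ℝ)
  have hnK : (0 : ℝ) < n - #(domX t) := sub_pos.2 (by exact_mod_cast hK)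
  have hn1 : (0 : ℝ) < n - 1 := sub_pos.2 (by exact_mod_cast hn)
  have hE0 : 1 - E ≠ 0 := by
    rw [hE]
    positivity
  refine ⟨hE0, hK, hY, ?_⟩
  rw [show pdep t - E = (1 - E) - (1 - pdep t) by ring, sub_div, div_self hE0, hE]
  field_simp

end AFD
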